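/- Let μ be a non-degenerate probability measure on Γ with finite second moment, with support S = supp μ. Let v ∈ ℝ^m and let v̂ = u + df be a harmonic decomposition of the 1-form v̂. Then ⟨v, θ(γ)⟩ = 0 for all γ ∈ Γ if and only if ∑_{x∈Δ} u(x,s) = 0 for every s ∈ S. In particular, if ⟨v, θ(γ)⟩ = 0 for all γ ∈ Γ, then χ(v̂) = χ(u) = 0. -/

import Mathlib

open scoped BigOperators Classical
open Filter Matrix MeasureTheory

namespace NSVA

noncomputable section

/-- Convolution of two real-valued functions on a group. -/
def conv {G : Type*} [Group G] (μ ν : G → ℝ) : G → ℝ :=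
  fun g => ∑' h : G, μ h * ν (h⁻¹ * g)

/-- Convolution powers: `convPow μ 0 = δ_1`, `convPow μ (n+1) = (convPow μ n) * μ`. -/
def convPow {G : Type*} [Group G] (μ : G → ℝ) : ℕ → G → ℝ
  | 0 => fun g => if g = 1 then 1 else 0
  | n + 1 => conv (convPow μ n) μ

/-- A probability measure on a countable set, viewed as a function. -/
def IsProb {G : Type*} (μ : G → ℝ) : Prop := (∀ g, 0 ≤ μ g) ∧ HasSum μ 1

/-- The support of `μ` generates the group as a semigroup. -/
def Nondeg {G : Type*} [Group G] (μ : G → ℝ) : Prop :=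
  ∀ g : G, g ∈ Subsemigroup.closure {x : G | 0 < μ x}

/-- `μ` is aperiodic: `μ_n(1) > 0` for all large enough `n`. -/
def Aperiodic {G : Type*} [Group G] (μ : G → ℝ) : Prop :=
  ∃ N : ℕ, ∀ n : ℕ, N ≤ n → 0 < convPow μ n 1

/-- Total variation distance between two (probability) functions. -/
def tv {Z : Type*} (p q : Z → ℝ) : ℝ := (1 / 2) * ∑' z : Z, |p z - q z|

/-- Word length with respect to a finite set `S₀`. -/
def wordLength {G : Type*} [Group G] (S₀ : Finset G) (g : G) : ℕ :=
  sInf {n : ℕ | ∃ l : List G, (∀ s ∈ l, s ∈ S₀) ∧ l.length = n ∧ l.prod = g}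

/-- Finite second moment with respect to a word metric given by a finite symmetric
generating set. -/
def FinSecondMoment {G : Type*} [Group G] (μ : G → ℝ) : Prop :=
  ∃ S₀ : Finset G, (∀ s ∈ S₀, s⁻¹ ∈ S₀) ∧ Subgroup.closure (S₀ : Set G) = ⊤ ∧
    Summable (fun g : G => (wordLength S₀ g : ℝ) ^ 2 * μ g)

/-- A group is virtually abelian if it has an abelian subgroup of finite index. -/
def VirtAbelian (G : Type*) [Group G] : Prop :=
  ∃ A : Subgroup G, A.index ≠ 0 ∧ ∀ a b : A, a * b = b * a

/-- The noised measure `π^ρ` on `G × G`. -/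
def noised {G : Type*} (μ : G → ℝ) (ρ : ℝ) : G × G → ℝ :=
  fun p => ρ * μ p.1 * μ p.2 + (1 - ρ) * μ p.1 * (if p.1 = p.2 then 1 else 0)

/-- First marginal of a measure on a product. -/
def marg1 {G₁ G₂ : Type*} (ν : G₁ × G₂ → ℝ) : G₁ → ℝ := fun γ₁ => ∑' γ₂ : G₂, ν (γ₁, γ₂)

/-- Second marginal of a measure on a product. -/
def marg2 {G₁ G₂ : Type*} (ν : G₁ × G₂ → ℝ) : G₂ → ℝ := fun γ₂ => ∑' γ₁ : G₁, ν (γ₁, γ₂)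

/-- A system of representatives of the right cosets `Λ\Γ` containing the identity,
together with the representative map `rep`, constant on right cosets. -/
structure RepSystem {Γ : Type*} [Group Γ] (Λ : Subgroup Γ) where
  Δ : Finset Γ
  one_mem : (1 : Γ) ∈ Δ
  rep : Γ → Γ
  rep_mem : ∀ γ : Γ, rep γ ∈ Δ
  rep_spec : ∀ γ : Γ, γ * (rep γ)⁻¹ ∈ Λ
  rep_idem : ∀ x ∈ Δ, rep x = x
  rep_coset : ∀ γ : Γ, ∀ v ∈ Λ, rep (v * γ) = rep γ

variable {Γ : Type*} [Group Γ] {Λ : Subgroup Γ} {m : ℕ}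

/-- The cocycle `α(x,s) = ψ(x·s·(x^s)⁻¹) ∈ ℤ^m`. -/
def cocycle (ψ : Λ ≃* Multiplicative (Fin m → ℤ)) (R : RepSystem Λ) (x s : Γ) : Fin m → ℤ :=
  Multiplicative.toAdd (ψ ⟨x * s * (R.rep (x * s))⁻¹, R.rep_spec (x * s)⟩)

/-- The transfer homomorphism `θ(γ) = ∑_{x∈Δ} α(x,γ)`. -/
def transfer (ψ : Λ ≃* Multiplicative (Fin m → ℤ)) (R : RepSystem Λ) (γ : Γ) : Fin m → ℤ :=
  ∑ x ∈ R.Δ, cocycle ψ R x γ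

/-- `Φ(γ) = ψ(v)` where `γ = v·x`, `v ∈ Λ`, `x ∈ Δ`. -/
def Phi (ψ : Λ ≃* Multiplicative (Fin m → ℤ)) (R : RepSystem Λ) (γ : Γ) : Fin m → ℤ :=
  Multiplicative.toAdd (ψ ⟨γ * (R.rep γ)⁻¹, R.rep_spec γ⟩)

/-- A 1-form on the quotient diagram. -/
def IsOneForm (R : RepSystem Λ) (ω : Γ → Γ → ℝ) : Prop :=
  ∀ x ∈ R.Δ, ∀ s : Γ, ω (R.rep (x * s)) s⁻¹ = -ω x s

/-- `χ(ω) = ∑_{x∈Δ} ∑_s c(x,s)·ω(x,s)` where `c(x,s) = μ(s)/#F`. -/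
def chi (R : RepSystem Λ) (μ : Γ → ℝ) (ω : Γ → Γ → ℝ) : ℝ :=
  ∑ x ∈ R.Δ, ∑' s : Γ, μ s / (Λ.index : ℝ) * ω x s

/-- Square-integrability of a 1-form. -/
def SqInt (R : RepSystem Λ) (μ : Γ → ℝ) (ω : Γ → Γ → ℝ) : Prop :=
  ∀ x ∈ R.Δ, Summable (fun s : Γ => μ s / (Λ.index : ℝ) * ω x s ^ 2)

/-- Harmonicity of a (square-integrable) 1-form. -/
def Harmonic (R : RepSystem Λ) (μ : Γ → ℝ) (ω : Γ → Γ → ℝ) : Prop :=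
  SqInt R μ ω ∧ ∀ x ∈ R.Δ, (∑' s : Γ, μ s * ω x s) = chi R μ ω

/-- The differential `df(x,s) = f(x^s) − f(x)`. -/
def dd (R : RepSystem Λ) (f : Γ → ℝ) : Γ → Γ → ℝ := fun x s => f (R.rep (x * s)) - f x

/-- `(u, f)` is a harmonic decomposition of the 1-form `ω`: `ω = u + df` with `u`
a harmonic 1-form. -/
def IsHarmDecomp (R : RepSystem Λ) (μ : Γ → ℝ) (ω u : Γ → Γ → ℝ) (f : Γ → ℝ) : Prop :=
  IsOneForm R u ∧ Harmonic R μ u ∧ ∀ x ∈ R.Δ, ∀ s : Γ, ω x s = u x s + dd R f x s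

/-- The 1-form `v̂(x,s) = ⟨v, α(x,s)⟩` (standard inner product). -/
def vhat (ψ : Λ ≃* Multiplicative (Fin m → ℤ)) (R : RepSystem Λ) (v : Fin m → ℝ) :
    Γ → Γ → ℝ :=
  fun x s => ∑ i, v i * (cocycle ψ R x s i : ℝ)

/-- The 1-form `v̂(x,s) = B(v, α(x,s))` for a bilinear form `B`. -/
def vhatB (ψ : Λ ≃* Multiplicative (Fin m → ℤ)) (R : RepSystem Λ)
    (B : (Fin m → ℝ) →ₗ[ℝ] (Fin m → ℝ) →ₗ[ℝ] ℝ) (v : Fin m → ℝ) : Γ → Γ → ℝ :=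
  fun x s => B v (fun i => (cocycle ψ R x s i : ℝ))

/-- The drift `ζ = (1/#F)·∑_{x∈Δ}∑_s μ(s)·α(x,s) ∈ ℝ^m`. -/
def drift (ψ : Λ ≃* Multiplicative (Fin m → ℤ)) (R : RepSystem Λ) (μ : Γ → ℝ) : Fin m → ℝ :=
  fun i => (Λ.index : ℝ)⁻¹ * ∑ x ∈ R.Δ, ∑' s : Γ, μ s * (cocycle ψ R x s i : ℝ)

/-- The covariance pairing `∑_{x,s} c(x,s)·u(x,s)·u'(x,s) − χ(u)·χ(u')`. -/
def cov (R : RepSystem Λ) (μ : Γ → ℝ) (u u' : Γ → Γ → ℝ) : ℝ :=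
  (∑ x ∈ R.Δ, ∑' s : Γ, μ s / (Λ.index : ℝ) * (u x s * u' x s)) - chi R μ u * chi R μ u'

/-- The transfer operator `ℒ_v` acting on functions `Δ → ℂ`. -/
def transferOp (ψ : Λ ≃* Multiplicative (Fin m → ℤ)) (R : RepSystem Λ) (μ : Γ → ℝ)
    (v : Fin m → ℝ) (f : Γ → ℂ) : Γ → ℂ :=
  fun x => ∑' s : Γ, (μ s : ℂ) *
    Complex.exp (2 * Real.pi * Complex.I * ((∑ i, v i * (cocycle ψ R x s i : ℝ)) : ℝ)) *
    f (R.rep (x * s))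

/-- The Gaussian density `ξ_A(w)` associated with a (positive-definite) matrix `A`. -/
def gauss {d : ℕ} (A : Matrix (Fin d) (Fin d) ℝ) (w : Fin d → ℝ) : ℝ :=
  (2 * Real.pi) ^ (-(d : ℝ) / 2) * A.det ^ (-(1 : ℝ) / 2) *
    Real.exp (-(w ⬝ᵥ A⁻¹.mulVec w) / 2)

/-- The product representative system for `Λ₁ × Λ₂ ≤ Γ₁ × Γ₂`. -/
def prodRep {Γ₁ : Type*} [Group Γ₁] {Γ₂ : Type*} [Group Γ₂]
    {Λ₁ : Subgroup Γ₁} {Λ₂ : Subgroup Γ₂}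
    (R₁ : RepSystem Λ₁) (R₂ : RepSystem Λ₂) : RepSystem (Λ₁.prod Λ₂) where
  Δ := R₁.Δ ×ˢ R₂.Δ
  one_mem := Finset.mem_product.mpr ⟨R₁.one_mem, R₂.one_mem⟩
  rep := fun p => (R₁.rep p.1, R₂.rep p.2)
  rep_mem := fun p => Finset.mem_product.mpr ⟨R₁.rep_mem p.1, R₂.rep_mem p.2⟩
  rep_spec := fun p => Subgroup.mem_prod.mpr ⟨R₁.rep_spec p.1, R₂.rep_spec p.2⟩
  rep_idem := fun x hx => by
    rcases Finset.mem_product.mp hx with ⟨h1, h2⟩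
    exact Prod.ext_iff.mpr ⟨R₁.rep_idem x.1 h1, R₂.rep_idem x.2 h2⟩
  rep_coset := fun p v hv => by
    rcases Subgroup.mem_prod.mp hv with ⟨h1, h2⟩
    exact Prod.ext_iff.mpr ⟨R₁.rep_coset p.1 v.1 h1, R₂.rep_coset p.2 v.2 h2⟩

/-- The 1-form `𝐯̂(x,s) = ⟨𝐯, α(x,s)⟩` on a product, standard inner product. -/
def vhat2 {Γ₁ : Type*} [Group Γ₁] {Γ₂ : Type*} [Group Γ₂]
    {Λ₁ : Subgroup Γ₁} {Λ₂ : Subgroup Γ₂} {m₁ m₂ : ℕ}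
    (ψ₁ : Λ₁ ≃* Multiplicative (Fin m₁ → ℤ)) (R₁ : RepSystem Λ₁)
    (ψ₂ : Λ₂ ≃* Multiplicative (Fin m₂ → ℤ)) (R₂ : RepSystem Λ₂)
    (v : (Fin m₁ → ℝ) × (Fin m₂ → ℝ)) : (Γ₁ × Γ₂) → (Γ₁ × Γ₂) → ℝ :=
  fun x s => (∑ i, v.1 i * (cocycle ψ₁ R₁ x.1 s.1 i : ℝ)) +
    ∑ i, v.2 i * (cocycle ψ₂ R₂ x.2 s.2 i : ℝ)

/-- The 1-form `𝐯̂(x,s) = ⟨𝐯, α(x,s)⟩` on a product, orthogonal-sum of the two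
bilinear forms `B₁`, `B₂`. -/
def vhatB2 {Γ₁ : Type*} [Group Γ₁] {Γ₂ : Type*} [Group Γ₂]
    {Λ₁ : Subgroup Γ₁} {Λ₂ : Subgroup Γ₂} {m₁ m₂ : ℕ}
    (ψ₁ : Λ₁ ≃* Multiplicative (Fin m₁ → ℤ)) (R₁ : RepSystem Λ₁)
    (B₁ : (Fin m₁ → ℝ) →ₗ[ℝ] (Fin m₁ → ℝ) →ₗ[ℝ] ℝ)
    (ψ₂ : Λ₂ ≃* Multiplicative (Fin m₂ → ℤ)) (R₂ : RepSystem Λ₂)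
    (B₂ : (Fin m₂ → ℝ) →ₗ[ℝ] (Fin m₂ → ℝ) →ₗ[ℝ] ℝ)
    (v : (Fin m₁ → ℝ) × (Fin m₂ → ℝ)) : (Γ₁ × Γ₂) → (Γ₁ × Γ₂) → ℝ :=
  fun x s => B₁ v.1 (fun i => (cocycle ψ₁ R₁ x.1 s.1 i : ℝ)) +
    B₂ v.2 (fun i => (cocycle ψ₂ R₂ x.2 s.2 i : ℝ))

end

/-!
Summing `v̂ = u + df` over `x ∈ Δ` kills the exact part, because `x ↦ x^s` permutes `Δ`; and
summing the cocycle `α(·, s)` over `Δ` gives `θ(s)`. Hence `∑_{x∈Δ} u(x,s) = ⟨v, θ(s)⟩` for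
every `s`. As `θ` is a homomorphism and `supp μ` generates `Γ` as a semigroup, `⟨v, θ⟩` vanishes
on `Γ` as soon as it vanishes on `supp μ`. The statement about `χ` follows by exchanging the
finite sum over `Δ` with the sum over `s`.
-/

section Development

variable {Γ : Type*} [Group Γ] {Λ : Subgroup Γ} {m : ℕ}

namespace RepSystem

variable (R : RepSystem Λ)

theorem rep_rep_mul_mul_inv {x : Γ} (hx : x ∈ R.Δ) (γ : Γ) :
    R.rep (R.rep (x * γ) * γ⁻¹) = x := by
  have h : R.rep (x * γ) * γ⁻¹ = (x * γ * (R.rep (x * γ))⁻¹)⁻¹ * x := by group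
  rw [h, R.rep_coset x _ (inv_mem (R.rep_spec (x * γ))), R.rep_idem x hx]

theorem rep_rep_mul (x s t : Γ) : R.rep (R.rep (x * s) * t) = R.rep (x * (s * t)) := by
  rw [← R.rep_coset (R.rep (x * s) * t) _ (R.rep_spec (x * s))]
  congr 1
  group

theorem sum_rep_mul {M : Type*} [AddCommMonoid M] (γ : Γ) (g : Γ → M) :
    ∑ x ∈ R.Δ, g (R.rep (x * γ)) = ∑ x ∈ R.Δ, g x :=
  Finset.sum_nbij' (fun x => R.rep (x * γ)) (fun x => R.rep (x * γ⁻¹))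
    (fun _ _ => R.rep_mem _) (fun _ _ => R.rep_mem _)
    (fun _ hx => R.rep_rep_mul_mul_inv hx γ)
    (fun _ hx => by simpa using R.rep_rep_mul_mul_inv hx γ⁻¹) (fun _ _ => rfl)

end RepSystem

section Transfer

variable (ψ : Λ ≃* Multiplicative (Fin m → ℤ)) (R : RepSystem Λ)

theorem cocycle_mul (x s t : Γ) :
    cocycle ψ R x (s * t) = cocycle ψ R x s + cocycle ψ R (R.rep (x * s)) t := by
  have h : (⟨x * (s * t) * (R.rep (x * (s * t)))⁻¹, R.rep_spec _⟩ : Λ) =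
      ⟨x * s * (R.rep (x * s))⁻¹, R.rep_spec _⟩ *
        ⟨R.rep (x * s) * t * (R.rep (R.rep (x * s) * t))⁻¹, R.rep_spec _⟩ := by
    ext
    simp only [MulMemClass.coe_mul, R.rep_rep_mul]
    group
  rw [cocycle, h, map_mul, toAdd_mul]
  rfl

theorem transfer_mul (s t : Γ) : transfer ψ R (s * t) = transfer ψ R s + transfer ψ R t := by
  simp only [transfer, cocycle_mul, Finset.sum_add_distrib]
  rw [R.sum_rep_mul s (fun y => cocycle ψ R y t)]

theorem inner_transfer_mul (v : Fin m → ℝ) (s t : Γ) :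
    ∑ i, v i * (transfer ψ R (s * t) i : ℝ) =
      ∑ i, v i * (transfer ψ R s i : ℝ) + ∑ i, v i * (transfer ψ R t i : ℝ) := by
  simp only [transfer_mul, Pi.add_apply, Int.cast_add, mul_add, Finset.sum_add_distrib]

theorem sum_vhat_eq_inner_transfer (v : Fin m → ℝ) (s : Γ) :
    ∑ x ∈ R.Δ, vhat ψ R v x s = ∑ i, v i * (transfer ψ R s i : ℝ) := by
  simp only [vhat, transfer, Finset.sum_apply, Int.cast_sum, Finset.mul_sum]
  exact Finset.sum_comm

end Transfer

section OneForms

variable (R : RepSystem Λ)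

theorem sum_dd_eq_zero (f : Γ → ℝ) (s : Γ) : ∑ x ∈ R.Δ, dd R f x s = 0 := by
  simp only [dd, Finset.sum_sub_distrib, R.sum_rep_mul s f, sub_self]

theorem sum_eq_sum_of_eq_add_dd {ω u : Γ → Γ → ℝ} {f : Γ → ℝ}
    (h : ∀ x ∈ R.Δ, ∀ s, ω x s = u x s + dd R f x s) (s : Γ) :
    ∑ x ∈ R.Δ, u x s = ∑ x ∈ R.Δ, ω x s := by
  rw [Finset.sum_congr rfl fun x hx => h x hx s, Finset.sum_add_distrib, sum_dd_eq_zero, add_zero]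

theorem chi_eq_zero_of_sum_eq_zero {μ : Γ → ℝ} {ω : Γ → Γ → ℝ}
    (hω : ∀ x ∈ R.Δ, Summable fun s => μ s / (Λ.index : ℝ) * ω x s)
    (h : ∀ s, ∑ x ∈ R.Δ, ω x s = 0) : chi R μ ω = 0 := by
  rw [chi, ← Summable.tsum_finsetSum hω]
  simp [← Finset.mul_sum, h]

end OneForms

section Summability

variable {ι : Type*} {c : ι → ℝ}

theorem summable_mul_of_summable_mul_sq (hc0 : ∀ i, 0 ≤ c i) (hc : Summable c) {g : ι → ℝ}
    (hg : Summable fun i => c i * g i ^ 2) : Summable fun i => c i * g i := by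
  refine Summable.of_norm_bounded ((hc.add hg).div_const 2) fun i => ?_
  have h : 2 * |g i| ≤ 1 + g i ^ 2 := by nlinarith [sq_nonneg (|g i| - 1), sq_abs (g i)]
  rw [Real.norm_eq_abs, abs_mul, abs_of_nonneg (hc0 i)]
  linarith [mul_le_mul_of_nonneg_left h (hc0 i)]

theorem summable_mul_of_abs_le (hc0 : ∀ i, 0 ≤ c i) (hc : Summable c) {g : ι → ℝ} {K : ℝ}
    (hg : ∀ i, |g i| ≤ K) : Summable fun i => c i * g i :=
  Summable.of_norm_bounded (hc.mul_right K) fun i => by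
    rw [Real.norm_eq_abs, abs_mul, abs_of_nonneg (hc0 i)]
    exact mul_le_mul_of_nonneg_left (hg i) (hc0 i)

variable (R : RepSystem Λ) {μ : Γ → ℝ}

theorem summable_chi_summand_of_sqInt (hμ : IsProb μ) {u : Γ → Γ → ℝ} (hu : SqInt R μ u) {x : Γ}
    (hx : x ∈ R.Δ) : Summable fun s => μ s / (Λ.index : ℝ) * u x s :=
  summable_mul_of_summable_mul_sq (fun s => div_nonneg (hμ.1 s) (Nat.cast_nonneg _))
    (hμ.2.summable.div_const _) (hu x hx)

theorem summable_chi_summand_dd (hμ : IsProb μ) (f : Γ → ℝ) (x : Γ) :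
    Summable fun s => μ s / (Λ.index : ℝ) * dd R f x s := by
  have hc0 s : 0 ≤ μ s / (Λ.index : ℝ) := div_nonneg (hμ.1 s) (Nat.cast_nonneg _)
  refine summable_mul_of_abs_le hc0 (hμ.2.summable.div_const _)
    (K := ∑ y ∈ R.Δ, |f y| + |f x|) fun s => (abs_sub _ _).trans ?_
  gcongr
  exact Finset.single_le_sum (f := fun y => |f y|) (fun _ _ => abs_nonneg _) (R.rep_mem _)

end Summability

end Development

theorem perp_transfer_iff_harmonic_row_sums_zero_general
    {Γ : Type*} [Group Γ] {Λ : Subgroup Γ} {m : ℕ} (ψ : Λ ≃* Multiplicative (Fin m → ℤ))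
    (R : RepSystem Λ) (μ : Γ → ℝ) (hμ : IsProb μ) (hnd : Nondeg μ) (v : Fin m → ℝ)
    (u : Γ → Γ → ℝ) (f : Γ → ℝ) (hdec : IsHarmDecomp R μ (vhat ψ R v) u f) :
    ((∀ γ : Γ, (∑ i, v i * (transfer ψ R γ i : ℝ)) = 0) ↔
      ∀ s : Γ, 0 < μ s → (∑ x ∈ R.Δ, u x s) = 0) ∧
    ((∀ γ : Γ, (∑ i, v i * (transfer ψ R γ i : ℝ)) = 0) →
      chi R μ (vhat ψ R v) = 0 ∧ chi R μ u = 0) := by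
  obtain ⟨-, ⟨hsq, -⟩, hvhat⟩ := hdec
  have hrow s : ∑ x ∈ R.Δ, u x s = ∑ i, v i * (transfer ψ R s i : ℝ) := by
    rw [sum_eq_sum_of_eq_add_dd R hvhat, sum_vhat_eq_inner_transfer]
  refine ⟨⟨fun h s _ => (hrow s).trans (h s), fun h γ => ?_⟩, fun h => ⟨?_, ?_⟩⟩
  · refine Subsemigroup.closure_induction (fun s hs => (hrow s).symm.trans (h s hs))
      (fun a b _ _ ha hb => ?_) (hnd γ)
    rw [inner_transfer_mul, ha, hb, add_zero]
  · refine chi_eq_zero_of_sum_eq_zero R (fun x hx => ?_)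
      fun s => (sum_vhat_eq_inner_transfer ψ R v s).trans (h s)
    simpa only [hvhat x hx, mul_add] using
      (summable_chi_summand_of_sqInt R hμ hsq hx).add (summable_chi_summand_dd R hμ f x)
  · exact chi_eq_zero_of_sum_eq_zero R (fun x hx => summable_chi_summand_of_sqInt R hμ hsq hx)
      fun s => (hrow s).trans (h s)

/-- `⟨v, θ(γ)⟩ = 0` for all `γ` iff `∑_{x∈Δ} u(x,s) = 0` for every
`s ∈ supp μ`, where `u` is the harmonic part of `v̂`; in particular in that case
`χ(v̂) = χ(u) = 0`. -/
theorem perp_transfer_iff_harmonic_row_sums_zero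
    {Γ : Type*} [Group Γ] [Countable Γ] {Λ : Subgroup Γ} (hN : Λ.Normal)
    (hI : Λ.index ≠ 0) {m : ℕ} (hm : 1 ≤ m) (ψ : Λ ≃* Multiplicative (Fin m → ℤ))
    (R : RepSystem Λ) (μ : Γ → ℝ) (hμ : IsProb μ) (hnd : Nondeg μ)
    (hmom : FinSecondMoment μ) (v : Fin m → ℝ)
    (u : Γ → Γ → ℝ) (f : Γ → ℝ) (hdec : IsHarmDecomp R μ (vhat ψ R v) u f) :
    ((∀ γ : Γ, (∑ i, v i * (transfer ψ R γ i : ℝ)) = 0) ↔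
      ∀ s : Γ, 0 < μ s → (∑ x ∈ R.Δ, u x s) = 0) ∧
    ((∀ γ : Γ, (∑ i, v i * (transfer ψ R γ i : ℝ)) = 0) →
      chi R μ (vhat ψ R v) = 0 ∧ chi R μ u = 0) :=
  perp_transfer_iff_harmonic_row_sums_zero_general ψ R μ hμ hnd v u f hdec

end NSVA
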